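/- For every integer k ≥ 1, the commutator subgroup γ_2(G_k) = [G_k, G_k] has exponent exactly 4: every element g of γ_2(G_k) satisfies g^4 = 1, and the element [y, x] has order 4. -/

import Mathlib

/-!
The conjugates `y_j = x^(-j) y x^j` generate a normal subgroup `A` with cyclic quotient (generated
by the image of `x`), so `[G_k, G_k] ≤ A`. Let `Z` be the subgroup of central elements of square
one. The relations put `[y_0, y_i]` in `Z` for `1 ≤ i ≤ 2^(k-1)`. Since `y_(j + 2^k) = y_j`, and
`[y_0, y_(-i)]` is conjugate to `[y_0, y_i]⁻¹`, this holds for all `i`; conjugating by powers of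
`x` then puts every `[y_a, y_b]` in `Z`. Also `y_j^2 = y^2 ∈ Z`, so the image of `A` in `G_k/Z` is
generated by commuting involutions, whence `a^2 ∈ Z` and `a^4 = 1` for all `a ∈ A`. Finally, an
involution `x̂` and an element `ŷ` of order four in `S_8` satisfy the relations of every `G_k` with
`k ≥ 1`, while `[ŷ, x̂]^2 ≠ 1`.
-/

open Subgroup

namespace P2G

/-- The commutator `[a,b] = a⁻¹ b⁻¹ a b` (left-normed convention of the paper). -/
def comm {M : Type*} [Group M] (a b : M) : M := a⁻¹ * b⁻¹ * a * b

def X : FreeGroup (Fin 2) := FreeGroup.of 0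
def Y : FreeGroup (Fin 2) := FreeGroup.of 1

/-- `y_j = x^(-j) y x^j` in the free group. -/
def yF (j : ℤ) : FreeGroup (Fin 2) := X ^ (-j) * Y * X ^ j

/-- Relations for `G_k`:
`x^(2^(k+1)) = y^4 = [x^(2^k), y] = [y^2, x] = 1` and
`[y_0,y_i]^2 = [y_0,y_i,x] = [y_0,y_i,y] = 1` for `1 ≤ i ≤ 2^(k-1)`. -/
def rels (k : ℕ) : Set (FreeGroup (Fin 2)) :=
  {X ^ 2 ^ (k + 1), Y ^ 4, comm (X ^ 2 ^ k) Y, comm (Y ^ 2) X} ∪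
    ⋃ i ∈ Set.Icc 1 (2 ^ (k - 1)),
      {comm (yF 0) (yF i) ^ 2, comm (comm (yF 0) (yF i)) X, comm (comm (yF 0) (yF i)) Y}

/-- The group `G_k`, given by the above presentation. -/
abbrev G (k : ℕ) := PresentedGroup (rels k)

/-- The generator `x` of `G_k`. -/
def x (k : ℕ) : G k := PresentedGroup.of 0

/-- The generator `y` of `G_k`. -/
def y (k : ℕ) : G k := PresentedGroup.of 1

/-- `y_j = x^(-j) y x^j` in `G_k`. -/
def yg (k : ℕ) (j : ℤ) : G k := x k ^ (-j) * y k * x k ^ j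

/-- `H_k`, the normal closure of `y` in `G_k`. -/
def Hsub (k : ℕ) : Subgroup (G k) := Subgroup.normalClosure {y k}

/-- `Z_k`, the normal closure in `G_k` of `{x^(2^k), y^2} ∪ {[y_0,y_i] : 1 ≤ i ≤ 2^(k-1)}`. -/
def Zsub (k : ℕ) : Subgroup (G k) :=
  Subgroup.normalClosure ({x k ^ 2 ^ k, y k ^ 2} ∪
    {g | ∃ i : ℕ, 1 ≤ i ∧ i ≤ 2 ^ (k - 1) ∧ g = comm (yg k 0) (yg k i)})

/-- `G_k^(2^j)`, the subgroup generated by all `2^j`-th powers of elements of `G_k`. -/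
def pow2 (k j : ℕ) : Subgroup (G k) := Subgroup.closure (Set.range fun g : G k => g ^ 2 ^ j)

/-- `w = y_(2^k − 1) y_(2^k − 2) ⋯ y_1 y_0` in `G_k`. -/
def w (k : ℕ) : G k := (((List.range (2 ^ k)).reverse).map fun j => yg k j).prod

/-- The left-normed commutator `c k i = [y, x, …(i copies of x)…, x]`; `c k 0 = y`. -/
def c (k : ℕ) : ℕ → G k
  | 0 => y k
  | i + 1 => comm (c k i) (x k)

/-- `γ_m(G_k)`, the `m`-th term of the lower central series (`γ_1 = G_k`). -/
abbrev gamma (k m : ℕ) : Subgroup (G k) := Subgroup.lowerCentralSeries (⊤ : Subgroup (G k)) (m - 1)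

open scoped commutatorElement

section Commutator

variable {Γ Δ : Type*} [Group Γ] [Group Δ]

lemma comm_eq_commutatorElement (a b : Γ) : comm a b = ⁅a⁻¹, b⁻¹⁆ := by
  simp [comm, commutatorElement_def]

lemma comm_eq_one_iff {a b : Γ} : comm a b = 1 ↔ Commute a b := by
  rw [comm_eq_commutatorElement, commutatorElement_eq_one_iff_commute, Commute.inv_inv_iff]

lemma inv_comm (a b : Γ) : (comm a b)⁻¹ = comm b a := by
  simp [comm, mul_assoc]

lemma map_comm {F : Type*} [FunLike F Γ Δ] [MonoidHomClass F Γ Δ] (φ : F) (a b : Γ) :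
    φ (comm a b) = comm (φ a) (φ b) := by
  simp [comm]

lemma comm_mem_commutator (a b : Γ) : comm a b ∈ commutator Γ := by
  rw [comm_eq_commutatorElement]
  exact commutator_mem_commutator (mem_top _) (mem_top _)

end Commutator

section CenterTwoTorsion

variable {Γ : Type*} [Group Γ]

lemma mem_center_of_forall_commute {S : Set Γ} (hS : closure S = ⊤) {g : Γ}
    (hg : ∀ s ∈ S, Commute s g) : g ∈ center Γ := by
  rw [← centralizer_univ, ← coe_top, ← hS, centralizer_closure]
  exact mem_centralizer_iff.mpr hg

variable (Γ) in
def centerTwoTorsion : Subgroup Γ where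
  carrier := {g | g ∈ center Γ ∧ g ^ 2 = 1}
  one_mem' := ⟨one_mem _, one_pow 2⟩
  mul_mem' := fun {a b} ⟨ha, ha2⟩ ⟨hb, hb2⟩ =>
    ⟨mul_mem ha hb, by rw [Commute.mul_pow (mem_center_iff.mp hb a), ha2, hb2, one_mul]⟩
  inv_mem' := fun ⟨ha, ha2⟩ => ⟨inv_mem ha, by rw [inv_pow, ha2, inv_one]⟩

instance : (centerTwoTorsion Γ).Normal :=
  ⟨fun g hg h => by rw [mem_center_iff.mp hg.1 h, mul_inv_cancel_right]; exact hg⟩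

end CenterTwoTorsion

section ClosureSquares

variable {Γ : Type*} [Group Γ]

lemma sq_eq_one_of_mem_closure {S : Set Γ} (hcomm : ∀ s ∈ S, ∀ t ∈ S, Commute s t)
    (hsq : ∀ s ∈ S, s ^ 2 = 1) {a : Γ} (ha : a ∈ closure S) : a ^ 2 = 1 := by
  have := isMulCommutative_closure hcomm
  induction ha using closure_induction with
  | mem s hs => exact hsq s hs
  | one => exact one_pow 2
  | mul u v hu hv hu2 hv2 =>
    rw [Commute.mul_pow (setLike_mul_comm hu hv), hu2, hv2, one_mul]
  | inv u _ hu2 => rw [inv_pow, hu2, inv_one]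

lemma sq_mem_of_mem_closure {N : Subgroup Γ} [N.Normal] {S : Set Γ}
    (hcomm : ∀ s ∈ S, ∀ t ∈ S, comm s t ∈ N) (hsq : ∀ s ∈ S, s ^ 2 ∈ N) {a : Γ}
    (ha : a ∈ closure S) : a ^ 2 ∈ N := by
  let π := QuotientGroup.mk' N
  have hπ : π a ∈ closure (π '' S) := by
    rw [← MonoidHom.map_closure]
    exact mem_map_of_mem π ha
  rw [← QuotientGroup.eq_one_iff, ← QuotientGroup.mk'_apply, map_pow]
  refine sq_eq_one_of_mem_closure ?_ ?_ hπ
  · rintro _ ⟨s, hs, rfl⟩ _ ⟨t, ht, rfl⟩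
    rw [← comm_eq_one_iff, ← map_comm, QuotientGroup.mk'_apply, QuotientGroup.eq_one_iff]
    exact hcomm s hs t ht
  · rintro _ ⟨s, hs, rfl⟩
    rw [← map_pow, QuotientGroup.mk'_apply, QuotientGroup.eq_one_iff]
    exact hsq s hs

end ClosureSquares

lemma periodic_int_emod {α : Type*} {f : ℤ → α} {n : ℤ} (hf : Function.Periodic f n)
    (m : ℤ) : f (m % n) = f m := by
  rw [Int.emod_def, mul_comm, ← Int.cast_id (n := m / n), hf.sub_int_mul_eq]

lemma forall_int_of_periodic_of_neg {P : ℤ → Prop} {n : ℤ} (hn : 0 < n)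
    (hper : Function.Periodic P (2 * n)) (hneg : ∀ m, P m → P (-m)) (h0 : P 0)
    (hsmall : ∀ i ∈ Set.Icc 1 n, P i) (m : ℤ) : P m := by
  have hr : P (m % (2 * n)) := by
    obtain ⟨hr0, hr2n⟩ : 0 ≤ m % (2 * n) ∧ m % (2 * n) < 2 * n :=
      ⟨Int.emod_nonneg m (by omega), Int.emod_lt_of_pos m (by omega)⟩
    set r := m % (2 * n)
    rcases lt_trichotomy r 0 with hr | hr | hr
    · omega
    · rw [hr]; exact h0
    by_cases hrn : r ≤ n
    · exact hsmall r ⟨hr, hrn⟩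
    · have := hneg _ (hsmall (2 * n - r) ⟨by omega, by omega⟩)
      rwa [neg_sub, hper.sub_eq] at this
  exact periodic_int_emod hper m ▸ hr

section ConjZpow

variable {Γ : Type*} [Group Γ] (x y : Γ)

def conjZpow (j : ℤ) : Γ := x ^ (-j) * y * x ^ j

lemma conjZpow_zero : conjZpow x y 0 = y := by
  simp [conjZpow]

lemma conjZpow_add (i j : ℤ) :
    conjZpow x y (i + j) = MulAut.conj (x ^ j)⁻¹ (conjZpow x y i) := by
  simp only [conjZpow, MulAut.conj_apply, neg_add, zpow_add, zpow_neg, inv_inv]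
  group

variable {x y}

lemma conjZpow_periodic {n : ℤ} (h : Commute (x ^ n) y) : Function.Periodic (conjZpow x y) n := by
  intro j
  have hj : Commute (x ^ n) (conjZpow x y j) :=
    ((Commute.zpow_zpow_self x n (-j)).mul_right h).mul_right (Commute.zpow_zpow_self x n j)
  rw [conjZpow_add, MulAut.conj_apply, inv_inv, mul_assoc, ← hj.eq, inv_mul_cancel_left]

lemma conjZpow_sq (h : Commute (y ^ 2) x) (j : ℤ) : conjZpow x y j ^ 2 = y ^ 2 := by
  have hj : Commute (x ^ j) (y ^ 2) := (h.zpow_right j).symm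
  calc conjZpow x y j ^ 2 = (x ^ j)⁻¹ * y ^ 2 * x ^ j := by
        simp only [conjZpow, pow_two, zpow_neg]; group
    _ = y ^ 2 := by rw [mul_assoc, ← hj.eq, inv_mul_cancel_left]

variable (x y)

lemma comm_conjZpow (a b : ℤ) :
    comm (conjZpow x y a) (conjZpow x y b) =
      MulAut.conj (x ^ a)⁻¹ (comm y (conjZpow x y (b - a))) := by
  have ha : MulAut.conj (x ^ a)⁻¹ y = conjZpow x y a := by
    rw [← zero_add a, conjZpow_add, conjZpow_zero, zero_add]
  rw [map_comm, ha, ← conjZpow_add, sub_add_cancel]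

end ConjZpow

section TwoGenerated

variable {Γ : Type*} [Group Γ] {x y : Γ}

lemma commutator_le_closure_range_conjZpow (hgen : closure {x, y} = ⊤) :
    commutator Γ ≤ closure (Set.range (conjZpow x y)) := by
  set A := closure (Set.range (conjZpow x y))
  have hyA : y ∈ A := subset_closure ⟨0, conjZpow_zero x y⟩
  have hnormal : A.Normal := by
    rw [← normalizer_eq_top_iff, eq_top_iff, ← hgen, closure_le]
    rintro g (rfl | rfl)
    · apply normalizer_le_normalizer_closure
      have hshift : MulAut.conj g ∘ conjZpow g y = conjZpow g y ∘ (· + -1) := by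
        ext i
        simp [conjZpow_add]
      rw [mem_normalizer_iff_conj_image_eq, ← Set.range_comp, hshift,
        (add_right_surjective (-1)).range_comp]
    · exact le_normalizer hyA
  refine hnormal.commutator_le_of_self_sup_commutative_eq_top (H := zpowers x) ?_ inferInstance
  rw [eq_top_iff, ← hgen, closure_le]
  rintro g (rfl | rfl)
  · exact mem_sup_right (mem_zpowers g)
  · exact mem_sup_left hyA

lemma comm_conjZpow_mem_centerTwoTorsion {n : ℤ} (hn : 0 < n) (hper : Commute (x ^ (2 * n)) y)
    (hsmall : ∀ i ∈ Set.Icc 1 n, comm y (conjZpow x y i) ∈ centerTwoTorsion Γ) (a b : ℤ) :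
    comm (conjZpow x y a) (conjZpow x y b) ∈ centerTwoTorsion Γ := by
  have hconj : ∀ g, ∀ u ∈ centerTwoTorsion Γ, MulAut.conj g u ∈ centerTwoTorsion Γ :=
    fun g u hu => (inferInstance : (centerTwoTorsion Γ).Normal).conj_mem u hu g
  have hall : ∀ m, comm y (conjZpow x y m) ∈ centerTwoTorsion Γ := by
    refine forall_int_of_periodic_of_neg hn (fun m => ?_) (fun m hm => ?_) ?_ hsmall
    · simp only [conjZpow_periodic hper m]
    · have hswap := comm_conjZpow x y (-m) 0
      rw [conjZpow_zero x y, zero_sub, neg_neg] at hswap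
      rw [← inv_comm, hswap]
      exact inv_mem (hconj _ _ hm)
    · rw [conjZpow_zero x y, comm_eq_one_iff.mpr (Commute.refl y)]
      exact one_mem _
  rw [comm_conjZpow]
  exact hconj _ _ (hall (b - a))

theorem pow_four_eq_one_of_mem_commutator (hgen : closure {x, y} = ⊤) (hy4 : y ^ 4 = 1)
    (hy2 : Commute (y ^ 2) x) {n : ℤ} (hn : 0 < n) (hper : Commute (x ^ (2 * n)) y)
    (hsmall : ∀ i ∈ Set.Icc 1 n, comm y (conjZpow x y i) ∈ centerTwoTorsion Γ)
    {g : Γ} (hg : g ∈ commutator Γ) : g ^ 4 = 1 := by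
  have hy2Z : y ^ 2 ∈ centerTwoTorsion Γ := by
    refine ⟨mem_center_of_forall_commute hgen ?_, by rw [← pow_mul]; exact hy4⟩
    rintro s (rfl | rfl)
    · exact hy2.symm
    · exact (Commute.refl s).pow_right 2
  have hg2 : g ^ 2 ∈ centerTwoTorsion Γ := by
    refine sq_mem_of_mem_closure ?_ ?_ (commutator_le_closure_range_conjZpow hgen hg)
    · rintro _ ⟨a, rfl⟩ _ ⟨b, rfl⟩
      exact comm_conjZpow_mem_centerTwoTorsion hn hper hsmall a b
    · rintro _ ⟨j, rfl⟩
      rwa [conjZpow_sq hy2]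
  rw [show 4 = 2 * 2 from rfl, pow_mul]
  exact hg2.2

end TwoGenerated

section Presentation

variable (k : ℕ)

lemma closure_x_y_eq_top : closure {x k, y k} = ⊤ := by
  rw [← PresentedGroup.closure_range_of]
  congr 1
  ext g
  simp [Fin.exists_fin_two, x, y, eq_comm]

lemma mk_X : PresentedGroup.mk (rels k) X = x k := rfl

lemma mk_Y : PresentedGroup.mk (rels k) Y = y k := rfl

lemma mk_yF (j : ℤ) : PresentedGroup.mk (rels k) (yF j) = conjZpow (x k) (y k) j := by
  simp only [yF, conjZpow, map_mul, map_zpow, mk_X, mk_Y]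

lemma y_pow_four : y k ^ 4 = 1 :=
  PresentedGroup.one_of_mem (rels := rels k) (x := Y ^ 4) (.inl (by simp))

lemma commute_y_sq_x : Commute (y k ^ 2) (x k) :=
  comm_eq_one_iff.mp
    (PresentedGroup.one_of_mem (rels := rels k) (x := comm (Y ^ 2) X) (.inl (by simp)))

lemma commute_x_zpow_y (hk : 1 ≤ k) : Commute (x k ^ (2 * (2 : ℤ) ^ (k - 1))) (y k) := by
  have h := PresentedGroup.one_of_mem (rels := rels k) (x := comm (X ^ 2 ^ k) Y) (.inl (by simp))
  rw [map_comm, map_pow, mk_X, mk_Y, comm_eq_one_iff] at h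
  have hexp : (2 : ℤ) * 2 ^ (k - 1) = ((2 ^ k : ℕ) : ℤ) := by
    rw [Nat.cast_pow, Nat.cast_ofNat, ← pow_succ', Nat.sub_add_cancel hk]
  rwa [hexp, zpow_natCast]

lemma comm_y_conjZpow_mem_centerTwoTorsion (i : ℤ) (hi : i ∈ Set.Icc 1 (2 ^ (k - 1))) :
    comm (y k) (conjZpow (x k) (y k) i) ∈ centerTwoTorsion (G k) := by
  have hrel : ∀ r ∈ ({comm (yF 0) (yF i) ^ 2, comm (comm (yF 0) (yF i)) X,
      comm (comm (yF 0) (yF i)) Y} : Set (FreeGroup (Fin 2))),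
      PresentedGroup.mk (rels k) r = 1 :=
    fun r hr => PresentedGroup.one_of_mem (.inr (Set.mem_biUnion hi hr))
  have h2 := hrel _ (.inl rfl)
  have hx := hrel _ (.inr (.inl rfl))
  have hy := hrel _ (.inr (.inr rfl))
  simp only [map_pow, map_comm, mk_yF, mk_X, mk_Y, conjZpow_zero] at h2 hx hy
  refine ⟨mem_center_of_forall_commute (closure_x_y_eq_top k) ?_, h2⟩
  rintro s (rfl | rfl)
  exacts [(comm_eq_one_iff.mp hx).symm, (comm_eq_one_iff.mp hy).symm]

end Presentation

section Model

def modelX : Equiv.Perm (Fin 8) :=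
  ⟨![0, 2, 1, 3, 5, 4, 7, 6], ![0, 2, 1, 3, 5, 4, 7, 6], by decide, by decide⟩

def modelY : Equiv.Perm (Fin 8) :=
  ⟨![1, 3, 4, 6, 7, 2, 0, 5], ![6, 0, 5, 1, 2, 7, 3, 4], by decide, by decide⟩

lemma modelX_sq : modelX ^ 2 = 1 := by decide

lemma modelY_pow_four : modelY ^ 4 = 1 := by decide

lemma comm_modelY_sq_modelX : comm (modelY ^ 2) modelX = 1 := by decide

lemma comm_modelY_modelX_sq_ne_one : comm modelY modelX ^ 2 ≠ 1 := by decide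

lemma comm_modelY_conjZpow_rels (r : ℤ) (hr : r = 0 ∨ r = 1) :
    comm modelY (conjZpow modelX modelY r) ^ 2 = 1 ∧
      comm (comm modelY (conjZpow modelX modelY r)) modelX = 1 ∧
      comm (comm modelY (conjZpow modelX modelY r)) modelY = 1 := by
  rcases hr with rfl | rfl <;> decide

lemma modelX_pow_two_pow {k : ℕ} (hk : 1 ≤ k) : modelX ^ 2 ^ k = 1 := by
  obtain ⟨m, hm⟩ := pow_dvd_pow 2 hk
  rw [hm, pow_one, pow_mul, modelX_sq, one_pow]

lemma conjZpow_model_periodic : Function.Periodic (conjZpow modelX modelY) 2 :=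
  conjZpow_periodic (by rw [zpow_ofNat, modelX_sq]; exact Commute.one_left _)

def modelGens : Fin 2 → Equiv.Perm (Fin 8) := ![modelX, modelY]

lemma lift_modelGens_eq_one_of_mem_rels {k : ℕ} (hk : 1 ≤ k) :
    ∀ r ∈ rels k, FreeGroup.lift modelGens r = 1 := by
  have hX : FreeGroup.lift modelGens X = modelX := FreeGroup.lift_apply_of
  have hY : FreeGroup.lift modelGens Y = modelY := FreeGroup.lift_apply_of
  have hyF (i : ℤ) : FreeGroup.lift modelGens (yF i) = conjZpow modelX modelY i := by
    simp only [yF, conjZpow, map_mul, map_zpow, hX, hY]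
  rintro r (hr | hr)
  · simp only [Set.mem_insert_iff, Set.mem_singleton_iff] at hr
    rcases hr with rfl | rfl | rfl | rfl <;> simp only [map_pow, map_comm, hX, hY]
    · exact modelX_pow_two_pow (by omega)
    · exact modelY_pow_four
    · rw [modelX_pow_two_pow hk]
      exact comm_eq_one_iff.mpr (Commute.one_left _)
    · exact comm_modelY_sq_modelX
  · simp only [Set.mem_iUnion, Set.mem_insert_iff, Set.mem_singleton_iff] at hr
    obtain ⟨i, -, hr⟩ := hr
    obtain ⟨h2, hx, hy⟩ := comm_modelY_conjZpow_rels (i % 2) (Int.emod_two_eq_zero_or_one i)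
    rw [periodic_int_emod conjZpow_model_periodic] at h2 hx hy
    rcases hr with rfl | rfl | rfl <;>
      simp only [map_pow, map_comm, hyF, hX, hY, conjZpow_zero] <;> assumption

lemma comm_y_x_sq_ne_one {k : ℕ} (hk : 1 ≤ k) : comm (y k) (x k) ^ 2 ≠ 1 := by
  intro h
  have hmodel := congrArg (PresentedGroup.toGroup (lift_modelGens_eq_one_of_mem_rels hk)) h
  rw [map_pow, map_comm, map_one, x, y, PresentedGroup.toGroup.of,
    PresentedGroup.toGroup.of] at hmodel
  exact comm_modelY_modelX_sq_ne_one hmodel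

end Model

/-- For every `k ≥ 1`, the commutator subgroup `γ_2(G_k) = [G_k, G_k]` has
exponent exactly `4`: every `g ∈ γ_2(G_k)` satisfies `g^4 = 1`, and `[y,x]` has order `4`. -/
theorem stmt5 (k : ℕ) (hk : 1 ≤ k) :
    (∀ g ∈ gamma k 2, g ^ 4 = 1) ∧ orderOf (comm (y k) (x k)) = 4 := by
  have hpow : ∀ g ∈ commutator (G k), g ^ 4 = 1 := fun g =>
    pow_four_eq_one_of_mem_commutator (closure_x_y_eq_top k) (y_pow_four k) (commute_y_sq_x k)
      (by positivity) (commute_x_zpow_y k hk) (comm_y_conjZpow_mem_centerTwoTorsion k)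
  refine ⟨fun g hg => hpow g (by rwa [gamma, top_lowerCentralSeries_one] at hg), ?_⟩
  exact orderOf_eq_prime_pow (p := 2) (n := 1) (comm_y_x_sq_ne_one hk)
    (hpow _ (comm_mem_commutator _ _))

end P2G
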